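/- arXiv:2509.00197 — 2 statements merged into one kernel-verified Lean document; each statement's English description precedes it below -/
import Mathlib

section
/- Let H be a real inner product space, let A : H → H be a continuous linear map satisfying ⟨A x, x⟩ ≤ −‖x‖² for all x ∈ H, let β > 0 and C ≥ 0, and let q : [0,∞) → H be continuous with ‖q(t)‖ ≤ C·e^(−βt) for all t ≥ 0. If v : [0,∞) → H is differentiable and satisfies v′(t) = A v(t) + v(t) + q(t) for all t ≥ 0, then ‖v(t)‖ ≤ ‖v(0)‖ + C/β for all t ≥ 0. -/
open Filter Real RealInnerProductSpace

/-!
With `L = A + 1` the equation reads `v' = L v + q`, and the spectral bound on `A` says exactly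
that `L` is dissipative, `⟪L y, y⟫ ≤ 0`. Hence `‖v‖` grows at most at the rate `‖q‖`
(where `v ≠ 0` this is `d‖v‖/dt = ⟪v, L v + q⟫ / ‖v‖ ≤ ‖q‖`; at a zero of `v` the right Dini
derivative of `‖v‖` is `‖q‖`), and comparison with `‖v 0‖ + ∫₀ᵗ C e^{-βs} ds` gives the bound.
-/

open Set Topology

section

variable {E : Type*} [NormedAddCommGroup E] [InnerProductSpace ℝ E]

theorem HasDerivAt.norm_of_ne_zero {f : ℝ → E} {f' : E} {x : ℝ} (hf : HasDerivAt f f' x)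
    (h0 : f x ≠ 0) : HasDerivAt (‖f ·‖) (⟪f x, f'⟫ / ‖f x‖) x := by
  have hsqrt := hf.norm_sq.sqrt (pow_ne_zero 2 (norm_ne_zero_iff.mpr h0))
  simp only [Real.sqrt_sq (norm_nonneg _)] at hsqrt
  rwa [mul_div_mul_left _ _ two_ne_zero] at hsqrt

theorem HasDerivAt.liminf_right_slope_norm_le_of_dissipative {L : E →L[ℝ] E}
    (hL : ∀ y, ⟪L y, y⟫ ≤ 0) {f : ℝ → E} {p : E} {x r : ℝ} (hf : HasDerivAt f (L (f x) + p) x)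
    (hr : ‖p‖ < r) : ∃ᶠ z in 𝓝[>] x, slope (norm ∘ f) x z < r := by
  by_cases h0 : f x = 0
  · rw [h0, map_zero, zero_add] at hf
    exact hf.hasDerivWithinAt.liminf_right_slope_norm_le hr
  · have hinner : ⟪f x, L (f x) + p⟫ ≤ ‖p‖ * ‖f x‖ := by
      rw [inner_add_right, real_inner_comm, mul_comm]
      linarith [hL (f x), real_inner_le_norm (f x) p]
    have hderiv_lt : ⟪f x, L (f x) + p⟫ / ‖f x‖ < r :=
      ((div_le_iff₀ (norm_pos_iff.mpr h0)).mpr hinner).trans_lt hr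
    have hslope := (hasDerivAt_iff_tendsto_slope.mp (hf.norm_of_ne_zero h0)).eventually_lt_const
      hderiv_lt
    exact (hslope.filter_mono (nhdsGT_le_nhdsNE x)).frequently

theorem image_norm_le_of_hasDerivAt_dissipative_deriv_boundary {L : E →L[ℝ] E}
    (hL : ∀ y, ⟪L y, y⟫ ≤ 0) {f p : ℝ → E} {a b : ℝ}
    (hf : ∀ x ∈ Icc a b, HasDerivAt f (L (f x) + p x) x) {B B' : ℝ → ℝ} (ha : ‖f a‖ ≤ B a)
    (hB : ContinuousOn B (Icc a b)) (hB' : ∀ x ∈ Ico a b, HasDerivWithinAt B (B' x) (Ici x) x)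
    (bound : ∀ x ∈ Ico a b, ‖p x‖ ≤ B' x) : ∀ ⦃x⦄, x ∈ Icc a b → ‖f x‖ ≤ B x :=
  have hf_cont : ContinuousOn f (Icc a b) := fun x hx =>
    (hf x hx).continuousAt.continuousWithinAt
  image_le_of_liminf_slope_right_le_deriv_boundary (continuous_norm.comp_continuousOn hf_cont) ha
    hB hB' fun x hx _ hr =>
      (hf x (Ico_subset_Icc_self hx)).liminf_right_slope_norm_le_of_dissipative hL
        ((bound x hx).trans_lt hr)

end

theorem hasDerivAt_div_mul_one_sub_exp (c : ℝ) {β : ℝ} (hβ : β ≠ 0) (s : ℝ) :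
    HasDerivAt (fun s => c / β * (1 - exp (-β * s))) (c * exp (-β * s)) s := by
  have hexp : HasDerivAt (fun s => exp (-β * s)) (exp (-β * s) * -β) s :=
    ((hasDerivAt_id s).const_mul (-β)).exp.congr_deriv (by simp)
  exact ((hexp.const_sub 1).const_mul (c / β)).congr_deriv (by field_simp)

theorem energy_estimate_general {H : Type*} [NormedAddCommGroup H] [InnerProductSpace ℝ H]
    (A : H →L[ℝ] H) (hA : ∀ x : H, ⟪A x, x⟫ ≤ -‖x‖ ^ 2)
    (β C : ℝ) (hβ : 0 < β) (hC : 0 ≤ C)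
    (q v : ℝ → H)
    (hq_bound : ∀ t : ℝ, 0 ≤ t → ‖q t‖ ≤ C * Real.exp (-β * t))
    (hv : ∀ t : ℝ, 0 ≤ t → HasDerivAt v (A (v t) + v t + q t) t) :
    ∀ t : ℝ, 0 ≤ t → ‖v t‖ ≤ ‖v 0‖ + C / β := by
  intro t ht
  have hdiss : ∀ y, ⟪(A + 1) y, y⟫ ≤ 0 := fun y => by
    simp only [add_apply, one_apply_eq_self, inner_add_left, real_inner_self_eq_norm_sq]
    linarith [hA y]
  set B : ℝ → ℝ := fun s => ‖v 0‖ + C / β * (1 - exp (-β * s))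
  have hB : ∀ s, HasDerivAt B (C * exp (-β * s)) s := fun s =>
    (hasDerivAt_div_mul_one_sub_exp C hβ.ne' s).const_add _
  have hvB : ‖v t‖ ≤ B t :=
    image_norm_le_of_hasDerivAt_dissipative_deriv_boundary hdiss (a := 0) (b := t)
      (fun x hx => by simpa only [add_apply, one_apply_eq_self] using hv x hx.1)
      (by simp [B]) (fun x _ => (hB x).continuousAt.continuousWithinAt)
      (fun x _ => (hB x).hasDerivWithinAt) (fun x hx => hq_bound x hx.1) ⟨ht, le_rfl⟩
  calc ‖v t‖ ≤ B t := hvB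
    _ ≤ ‖v 0‖ + C / β := add_le_add_right
      (mul_le_of_le_one_right (div_nonneg hC hβ.le) (sub_le_self 1 (exp_pos (-β * t)).le)) _

/-- Abstract energy estimate: if `A` satisfies the spectral bound
`⟨Ax, x⟩ ≤ -‖x‖²`, `q` is continuous with `‖q(t)‖ ≤ C e^{-βt}` for `t ≥ 0`, and
`v` solves `v′ = Av + v + q` on `[0,∞)`, then `‖v(t)‖ ≤ ‖v(0)‖ + C/β`. -/
theorem energy_estimate {H : Type*} [NormedAddCommGroup H] [InnerProductSpace ℝ H]
    (A : H →L[ℝ] H) (hA : ∀ x : H, ⟪A x, x⟫ ≤ -‖x‖ ^ 2)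
    (β C : ℝ) (hβ : 0 < β) (hC : 0 ≤ C)
    (q v : ℝ → H)
    (hq_cont : ContinuousOn q (Set.Ici 0))
    (hq_bound : ∀ t : ℝ, 0 ≤ t → ‖q t‖ ≤ C * Real.exp (-β * t))
    (hv : ∀ t : ℝ, 0 ≤ t → HasDerivAt v (A (v t) + v t + q t) t) :
    ∀ t : ℝ, 0 ≤ t → ‖v t‖ ≤ ‖v 0‖ + C / β :=
  energy_estimate_general A hA β C hβ hC q v hq_bound hv
end

section
/- Let K ≥ 0 and let g : [0,∞) → ℝ be continuous with |g(r)| ≤ K·e^(−r) for all r ≥ 0. If u : [0,∞) → ℝ is twice continuously differentiable, satisfies u″(r) − 2u′(r) + u(r) = g(r) for all r ≥ 0, and ∫₀^∞ e^(−2r)·u(r)² dr < ∞, then there is a constant K′ depending only on K such that |u(r)| ≤ K′·e^(−r) for all r ≥ 0. -/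
/-!
Substituting `v = e^{-r} u` turns the equation into `v'' = h` with `h = e^{-r} g`, so
`|h(r)| ≤ K e^{-2r}`, and the integrability hypothesis says `v ∈ L²(0, ∞)`. Taylor's formula
with integral remainder, with the remainder moved to `(r, ∞)`, writes
`v(r) = α + β r + ∫_r^∞ (s - r) h(s) ds`, and the tail integral is at most `(K/4) e^{-2r}`,
hence square integrable. So the affine part `α + β r` is square integrable, and therefore zero.
-/

open Filter Real Set MeasureTheory Topology

theorem eq_zero_of_integrableOn_Ici_of_tendsto {E : Type*} [NormedAddCommGroup E] {f : ℝ → E}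
    {a : ℝ} {l : E} (hf : IntegrableOn f (Ici a)) (hl : Tendsto f atTop (𝓝 l)) : l = 0 :=
  IntegrableAtFilter.eq_zero_of_tendsto ⟨Ici a, Ici_mem_atTop a, hf⟩
    (fun _ hs ↦ let ⟨b, hb⟩ := mem_atTop_sets.1 hs
      top_le_iff.1 (volume_Ici (a := b) ▸ measure_mono hb)) hl

theorem affine_eq_zero_of_integrableOn_sq {α β : ℝ}
    (h : IntegrableOn (fun r ↦ (α + β * r) ^ 2) (Ici 0)) : α = 0 ∧ β = 0 := by
  obtain rfl : β = 0 := by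
    have hint : IntegrableOn (fun r ↦ (α / r + β) ^ 2) (Ici 1) := by
      refine (h.mono_set (Ici_subset_Ici.2 zero_le_one)).mono' (by fun_prop)
        ((ae_restrict_iff' measurableSet_Ici).2 (ae_of_all _ fun r (hr : 1 ≤ r) ↦ ?_))
      have hr0 : 0 < r := one_pos.trans_le hr
      rw [norm_of_nonneg (sq_nonneg _), div_add' _ _ _ hr0.ne', div_pow]
      exact div_le_self (sq_nonneg _) (one_le_pow₀ hr)
    have hlim : Tendsto (fun r ↦ (α / r + β) ^ 2) atTop (𝓝 (β ^ 2)) := by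
      simpa using ((tendsto_const_nhds.div_atTop tendsto_id).add_const β).pow 2
    exact pow_eq_zero_iff two_ne_zero |>.1 (eq_zero_of_integrableOn_Ici_of_tendsto hint hlim)
  -- a nonzero constant is not integrable on `Ici 0`, which has infinite measure
  exact ⟨by simpa using h, rfl⟩

section TailIntegral

variable {a : ℝ} (r : ℝ)

private theorem hasDerivAt_primitive_sub_mul_exp_neg_mul (ha : a ≠ 0) (x : ℝ) :
    HasDerivAt (fun s ↦ -((s - r) / a + 1 / a ^ 2) * exp (-a * s))
      ((x - r) * exp (-a * x)) x := by
  refine ((((hasDerivAt_id' x).sub_const r).div_const a |>.add_const (1 / a ^ 2)).fun_neg.fun_mul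
    ((hasDerivAt_id' x).const_mul (-a)).exp).congr_deriv ?_
  field_simp
  ring

private theorem tendsto_primitive_sub_mul_exp_neg_mul (ha : 0 < a) :
    Tendsto (fun s ↦ -((s - r) / a + 1 / a ^ 2) * exp (-a * s)) atTop (𝓝 0) := by
  have h1 := tendsto_rpow_mul_exp_neg_mul_atTop_nhds_zero 1 a ha
  have h0 := tendsto_rpow_mul_exp_neg_mul_atTop_nhds_zero 0 a ha
  simp only [rpow_one, rpow_zero, one_mul] at h1 h0
  convert ((h1.div_const a).add (h0.const_mul (1 / a ^ 2 - r / a))).neg using 1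
  · ext s; ring
  · simp

theorem integrableOn_Ioi_sub_mul_exp_neg_mul (ha : 0 < a) :
    IntegrableOn (fun s ↦ (s - r) * exp (-a * s)) (Ioi r) :=
  integrableOn_Ioi_deriv_of_nonneg'
    (fun x _ ↦ hasDerivAt_primitive_sub_mul_exp_neg_mul r ha.ne' x)
    (fun x (hx : r < x) ↦ mul_nonneg (sub_nonneg.2 hx.le) (exp_pos _).le)
    (tendsto_primitive_sub_mul_exp_neg_mul r ha)

theorem integral_Ioi_sub_mul_exp_neg_mul (ha : 0 < a) :
    ∫ s in Ioi r, (s - r) * exp (-a * s) = exp (-a * r) / a ^ 2 := by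
  rw [integral_Ioi_of_hasDerivAt_of_nonneg'
    (fun x _ ↦ hasDerivAt_primitive_sub_mul_exp_neg_mul r ha.ne' x)
    (fun x (hx : r < x) ↦ mul_nonneg (sub_nonneg.2 hx.le) (exp_pos _).le)
    (tendsto_primitive_sub_mul_exp_neg_mul r ha)]
  ring

end TailIntegral

section SecondOrder

variable {v v' h : ℝ → ℝ}

theorem taylor_integral_remainder_Ici {a : ℝ}
    (hv : ∀ x, a ≤ x → HasDerivWithinAt v (v' x) (Ici a) x)
    (hv' : ∀ x, a ≤ x → HasDerivWithinAt v' (h x) (Ici a) x) (hh : ContinuousOn h (Ici a))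
    {r : ℝ} (hr : a ≤ r) :
    v r = v a + v' a * (r - a) + ∫ s in a..r, (r - s) * h s := by
  have hsub : Icc a r ⊆ Ici a := Icc_subset_Ici_self
  have hcont {f f' : ℝ → ℝ} (hf : ∀ x, a ≤ x → HasDerivWithinAt f (f' x) (Ici a) x) :
      ContinuousOn f (Icc a r) :=
    fun x hx ↦ (hf x hx.1).continuousWithinAt.mono hsub
  have hderiv (x : ℝ) (hx : x ∈ Ioo a r) :
      HasDerivAt (fun s ↦ v s + (r - s) * v' s) ((r - x) * h x) x := by
    have hx' : Ici a ∈ 𝓝 x := Ici_mem_nhds hx.1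
    refine (((hv x hx.1.le).hasDerivAt hx').add (((hasDerivAt_id' x).const_sub r).mul
      ((hv' x hx.1.le).hasDerivAt hx'))).congr_deriv ?_
    ring
  have ftc := intervalIntegral.integral_eq_sub_of_hasDeriv_right_of_le hr
    ((hcont hv).add ((continuousOn_const.sub continuousOn_id).mul (hcont hv')))
    (fun x hx ↦ (hderiv x hx).hasDerivWithinAt)
    (((continuousOn_const.sub continuousOn_id).mul (hh.mono hsub)).intervalIntegrable_of_Icc hr)
  simp only [ftc, Pi.add_apply, Pi.mul_apply, Pi.sub_apply, id_eq]
  ring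

theorem eq_affine_add_integral_Ioi
    (hv : ∀ x, 0 ≤ x → HasDerivWithinAt v (v' x) (Ici 0) x)
    (hv' : ∀ x, 0 ≤ x → HasDerivWithinAt v' (h x) (Ici 0) x) (hh : ContinuousOn h (Ici 0))
    (hInt : IntegrableOn h (Ioi 0)) (hInt' : IntegrableOn (fun s ↦ s * h s) (Ioi 0))
    {r : ℝ} (hr : 0 ≤ r) :
    v r = (v 0 - ∫ s in Ioi 0, s * h s) + (v' 0 + ∫ s in Ioi 0, h s) * r +
      ∫ s in Ioi r, (s - r) * h s := by
  have hsplit : (fun s ↦ (s - r) * h s) = fun s ↦ s * h s - r * h s := by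
    ext s; ring
  have hInt_r : IntegrableOn (fun s ↦ (s - r) * h s) (Ioi 0) :=
    hsplit ▸ hInt'.sub (hInt.const_mul r)
  have hfull :
      ∫ s in Ioi 0, (s - r) * h s = (∫ s in Ioi 0, s * h s) - r * ∫ s in Ioi 0, h s := by
    rw [hsplit, integral_sub hInt' (hInt.const_mul r), integral_const_mul]
  have htail := intervalIntegral.integral_Ioi_sub_Ioi hInt_r hr
  have hflip : ∫ s in (0 : ℝ)..r, (r - s) * h s = -∫ s in (0 : ℝ)..r, (s - r) * h s := by
    rw [← intervalIntegral.integral_neg]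
    congr 1; ext s; ring
  rw [taylor_integral_remainder_Ici hv hv' hh hr, hflip, ← htail, hfull]
  linarith

theorem abs_integral_Ioi_sub_mul_le {K a r : ℝ} (ha : 0 < a)
    (hh : ∀ s, r < s → |h s| ≤ K * exp (-a * s)) :
    |∫ s in Ioi r, (s - r) * h s| ≤ K / a ^ 2 * exp (-a * r) := by
  calc |∫ s in Ioi r, (s - r) * h s| ≤ ∫ s in Ioi r, K * ((s - r) * exp (-a * s)) := by
        refine norm_integral_le_of_norm_le (f := fun s ↦ (s - r) * h s)
          ((integrableOn_Ioi_sub_mul_exp_neg_mul r ha).const_mul K)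
          ((ae_restrict_iff' measurableSet_Ioi).2 (ae_of_all _ fun s (hs : r < s) ↦ ?_))
        rw [norm_mul, Real.norm_of_nonneg (sub_nonneg.2 hs.le), Real.norm_eq_abs, mul_left_comm]
        exact mul_le_mul_of_nonneg_left (hh s hs) (sub_nonneg.2 hs.le)
    _ = K / a ^ 2 * exp (-a * r) := by
        rw [integral_const_mul, integral_Ioi_sub_mul_exp_neg_mul r ha]
        ring

theorem abs_le_of_hasDerivWithinAt_of_integrableOn_sq {K a : ℝ} (ha : 0 < a)
    (hv : ∀ x, 0 ≤ x → HasDerivWithinAt v (v' x) (Ici 0) x)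
    (hv' : ∀ x, 0 ≤ x → HasDerivWithinAt v' (h x) (Ici 0) x) (hh : ContinuousOn h (Ici 0))
    (hbound : ∀ s, 0 ≤ s → |h s| ≤ K * exp (-a * s))
    (hL2 : IntegrableOn (fun r ↦ v r ^ 2) (Ici 0)) {r : ℝ} (hr : 0 ≤ r) :
    |v r| ≤ K / a ^ 2 * exp (-a * r) := by
  have hmeas : AEStronglyMeasurable h (volume.restrict (Ioi 0)) :=
    (hh.mono Ioi_subset_Ici_self).aestronglyMeasurable measurableSet_Ioi
  have hInt : IntegrableOn h (Ioi 0) :=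
    ((exp_neg_integrableOn_Ioi 0 ha).const_mul K).mono' hmeas
      ((ae_restrict_iff' measurableSet_Ioi).2 (ae_of_all _ fun s hs ↦ hbound s (le_of_lt hs)))
  have hInt' : IntegrableOn (fun s ↦ s * h s) (Ioi 0) := by
    refine ((integrableOn_Ioi_sub_mul_exp_neg_mul 0 ha).const_mul K).mono'
      (continuous_id.aestronglyMeasurable.mul hmeas)
      ((ae_restrict_iff' measurableSet_Ioi).2 (ae_of_all _ fun s (hs : 0 < s) ↦ ?_))
    rw [norm_mul, Real.norm_of_nonneg hs.le, Real.norm_eq_abs, sub_zero, mul_left_comm]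
    exact mul_le_mul_of_nonneg_left (hbound s hs.le) hs.le
  have hrep (x : ℝ) (hx : 0 ≤ x) := eq_affine_add_integral_Ioi hv hv' hh hInt hInt' hx
  set α := v 0 - ∫ s in Ioi 0, s * h s
  set β := v' 0 + ∫ s in Ioi 0, h s
  have htail (x : ℝ) (hx : 0 ≤ x) :
      |∫ s in Ioi x, (s - x) * h s| ≤ K / a ^ 2 * exp (-a * x) :=
    abs_integral_Ioi_sub_mul_le ha fun s hs ↦ hbound s (hx.trans hs.le)
  have hexp_sq (x : ℝ) :
      (K / a ^ 2 * exp (-a * x)) ^ 2 = (K / a ^ 2) ^ 2 * exp (-(2 * a) * x) := by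
    rw [mul_pow, ← exp_nat_mul]; ring_nf
  have hdom :
      IntegrableOn (fun x ↦ 2 * v x ^ 2 + 2 * (K / a ^ 2 * exp (-a * x)) ^ 2) (Ici 0) := by
    simp_rw [hexp_sq]
    exact (hL2.const_mul 2).add (((integrableOn_Ici_iff_integrableOn_Ioi).2
      (exp_neg_integrableOn_Ioi 0 (by positivity))).const_mul _ |>.const_mul 2)
  have haffine : IntegrableOn (fun x ↦ (α + β * x) ^ 2) (Ici 0) := by
    refine hdom.mono' (by fun_prop)
      ((ae_restrict_iff' measurableSet_Ici).2 (ae_of_all _ fun x (hx : 0 ≤ x) ↦ ?_))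
    have hαβ : α + β * x = v x - ∫ s in Ioi x, (s - x) * h s := by linarith [hrep x hx]
    rw [Real.norm_of_nonneg (sq_nonneg _), hαβ]
    have := sq_le_sq' (abs_le.1 (htail x hx)).1 (abs_le.1 (htail x hx)).2
    nlinarith [sq_nonneg (v x + ∫ s in Ioi x, (s - x) * h s)]
  obtain ⟨hα, hβ⟩ := affine_eq_zero_of_integrableOn_sq haffine
  rw [hrep r hr, hα, hβ, zero_mul, zero_add, zero_add]
  exact htail r hr

end SecondOrder

theorem hasDerivWithinAt_exp_neg_mul {f : ℝ → ℝ} {f' x : ℝ} {s : Set ℝ}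
    (hf : HasDerivWithinAt f f' s x) :
    HasDerivWithinAt (fun y ↦ exp (-y) * f y) (exp (-x) * (f' - f x)) s x :=
  ((hasDerivAt_neg x).exp.hasDerivWithinAt.mul hf).congr_deriv (by ring)

theorem ode_decay_inhomogeneous_general (K : ℝ) :
    ∃ K' : ℝ, ∀ g u u' u'' : ℝ → ℝ,
      ContinuousOn g (Set.Ici 0) →
      (∀ r : ℝ, 0 ≤ r → |g r| ≤ K * Real.exp (-r)) →
      (∀ r : ℝ, 0 ≤ r → HasDerivWithinAt u (u' r) (Set.Ici 0) r) →
      (∀ r : ℝ, 0 ≤ r → HasDerivWithinAt u' (u'' r) (Set.Ici 0) r) →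
      ContinuousOn u'' (Set.Ici 0) →
      (∀ r : ℝ, 0 ≤ r → u'' r - 2 * u' r + u r = g r) →
      MeasureTheory.IntegrableOn (fun r : ℝ => Real.exp (-2 * r) * (u r) ^ 2)
        (Set.Ici 0) →
      ∀ r : ℝ, 0 ≤ r → |u r| ≤ K' * Real.exp (-r) := by
  refine ⟨K / 4, fun g u u' u'' hg hgK hu hu' _ hode hL2 r hr ↦ ?_⟩
  have hexp_sq (x : ℝ) : exp (-2 * x) = exp (-x) ^ 2 := by rw [← exp_nat_mul]; ring_nf
  have hdecay := abs_le_of_hasDerivWithinAt_of_integrableOn_sq (K := K)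
    (v := fun x ↦ exp (-x) * u x) (h := fun x ↦ exp (-x) * g x) two_pos
    (fun x hx ↦ hasDerivWithinAt_exp_neg_mul (hu x hx))
    (fun x hx ↦ (hasDerivWithinAt_exp_neg_mul ((hu' x hx).fun_sub (hu x hx))).congr_deriv
      (by rw [← hode x hx]; ring))
    (continuous_neg.rexp.continuousOn.mul hg)
    (fun s hs ↦ by
      rw [abs_mul, abs_of_pos (exp_pos _), hexp_sq, sq, mul_left_comm]
      exact mul_le_mul_of_nonneg_left (hgK s hs) (exp_pos _).le)
    (by simpa only [mul_pow, hexp_sq] using hL2) hr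
  rw [abs_mul, abs_of_pos (exp_pos _), hexp_sq] at hdecay
  refine le_of_mul_le_mul_left ?_ (exp_pos (-r))
  calc exp (-r) * |u r| ≤ K / 2 ^ 2 * exp (-r) ^ 2 := hdecay
    _ = exp (-r) * (K / 4 * exp (-r)) := by ring

/-- Inhomogeneous double-root ODE: for `K ≥ 0` there is `K′` (depending only on
`K`) such that any C² solution on `[0,∞)` of `u″ - 2u′ + u = g` with
`|g(r)| ≤ K e^{-r}` and `∫₀^∞ e^{-2r} u(r)² dr < ∞` satisfies
`|u(r)| ≤ K′ e^{-r}`. -/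
theorem ode_decay_inhomogeneous (K : ℝ) (hK : 0 ≤ K) :
    ∃ K' : ℝ, ∀ g u u' u'' : ℝ → ℝ,
      ContinuousOn g (Set.Ici 0) →
      (∀ r : ℝ, 0 ≤ r → |g r| ≤ K * Real.exp (-r)) →
      (∀ r : ℝ, 0 ≤ r → HasDerivWithinAt u (u' r) (Set.Ici 0) r) →
      (∀ r : ℝ, 0 ≤ r → HasDerivWithinAt u' (u'' r) (Set.Ici 0) r) →
      ContinuousOn u'' (Set.Ici 0) →
      (∀ r : ℝ, 0 ≤ r → u'' r - 2 * u' r + u r = g r) →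
      MeasureTheory.IntegrableOn (fun r : ℝ => Real.exp (-2 * r) * (u r) ^ 2)
        (Set.Ici 0) →
      ∀ r : ℝ, 0 ≤ r → |u r| ≤ K' * Real.exp (-r) :=
  ode_decay_inhomogeneous_general K
end
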